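/- Let c be an immersed closed curve and Y := D_s c × D_s²c the binormal direction. Then (d/dt)|_{t=0} ℓ_{c+t·Y} = 0 and (d/dt)|_{t=0} K(c + t·Y) = 0, where ℓ is the length and K(c) := ∫ κ² ds = ∫ |D_s²c|² ds is the total squared curvature (with all quantities computed for the curve c + t·Y, which is immersed for t near 0). Consequently the Hamiltonian H(c) = ℓ_c·K(c) satisfies (d/dt)|_{t=0} H(c + t·Y) = 0, i.e. H is infinitesimally invariant under the binormal flow. -/

import Mathlib

noncomputable section

open Real

/-- Points of `ℝ³`. -/
abbrev V3 := Fin 3 → ℝ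

/-- Euclidean inner product on `ℝ³`. -/
def dot3 (u v : V3) : ℝ := u 0 * v 0 + u 1 * v 1 + u 2 * v 2

/-- Cross product on `ℝ³`. -/
def cross3 (u v : V3) : V3 :=
  ![u 1 * v 2 - u 2 * v 1, u 2 * v 0 - u 0 * v 2, u 0 * v 1 - u 1 * v 0]

/-- Euclidean norm on `ℝ³`. -/
def norm3 (u : V3) : ℝ := Real.sqrt (dot3 u u)

/-- A closed curve: a smooth `2π`-periodic map `ℝ → ℝ³`. -/
def IsClosedCurve (c : ℝ → V3) : Prop :=
  ContDiff ℝ (⊤ : ℕ∞) c ∧ ∀ θ, c (θ + 2 * π) = c θ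

/-- An immersed closed curve: `c'(θ) ≠ 0` for all `θ`. -/
def IsImmersed (c : ℝ → V3) : Prop :=
  IsClosedCurve c ∧ ∀ θ, deriv c θ ≠ 0

/-- A direction (tangent vector): a smooth `2π`-periodic map `ℝ → ℝ³`. -/
def IsDirection (h : ℝ → V3) : Prop :=
  ContDiff ℝ (⊤ : ℕ∞) h ∧ ∀ θ, h (θ + 2 * π) = h θ

/-- Arc-length derivative along `c`: `D_s h = h'/|c'|`. -/
def Ds (c h : ℝ → V3) : ℝ → V3 := fun θ => (norm3 (deriv c θ))⁻¹ • deriv h θ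

/-- The unit tangent `T = D_s c = c'/|c'|`. -/
def unitT (c : ℝ → V3) : ℝ → V3 := Ds c c

/-- `D_s² c = D_s (D_s c)`. -/
def Ds2c (c : ℝ → V3) : ℝ → V3 := Ds c (Ds c c)

/-- Arc-length integral `∫ f ds = ∫₀^{2π} f(θ) |c'(θ)| dθ`. -/
def arcInt (c : ℝ → V3) (f : ℝ → ℝ) : ℝ :=
  ∫ θ in (0:ℝ)..(2 * π), f θ * norm3 (deriv c θ)

/-- `L²(ds)` pairing `⟨f,g⟩_{L²} = ∫ ⟨f,g⟩ ds`. -/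
def L2 (c f g : ℝ → V3) : ℝ := arcInt c (fun θ => dot3 (f θ) (g θ))

/-- Length `ℓ_c = ∫₀^{2π} |c'(θ)| dθ`. -/
def curveLen (c : ℝ → V3) : ℝ := ∫ θ in (0:ℝ)..(2 * π), norm3 (deriv c θ)

/-- The Liouville one-form for `L = id`: `Θ(c,h) = ∫₀^{2π} ⟨c × c', h⟩ dθ`. -/
def Theta (c h : ℝ → V3) : ℝ :=
  ∫ θ in (0:ℝ)..(2 * π), dot3 (cross3 (c θ) (deriv c θ)) (h θ)

/-- The squared curvature `κ² = |D_s² c|²`. -/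
def kappaSq (c : ℝ → V3) (θ : ℝ) : ℝ := dot3 (Ds2c c θ) (Ds2c c θ)

/-- The total squared curvature `K(c) = ∫ κ² ds = ∫ |D_s²c|² ds`. -/
def totalK (c : ℝ → V3) : ℝ := arcInt c (fun θ => dot3 (Ds2c c θ) (Ds2c c θ))

/-! ### Auxiliary lemmas -/

lemma dot3_self_nonneg (u : V3) : 0 ≤ dot3 u u := by
  unfold dot3; nlinarith [sq_nonneg (u 0), sq_nonneg (u 1), sq_nonneg (u 2)]

lemma dot3_self_pos {u : V3} (h : u ≠ 0) : 0 < dot3 u u := by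
  rcases (dot3_self_nonneg u).lt_or_eq with h' | h'
  · exact h'
  · exfalso
    apply h
    have h0 : u 0 ^ 2 + u 1 ^ 2 + u 2 ^ 2 = 0 := by unfold dot3 at h'; nlinarith
    have e0 : u 0 = 0 := by nlinarith [sq_nonneg (u 0), sq_nonneg (u 1), sq_nonneg (u 2)]
    have e1 : u 1 = 0 := by nlinarith [sq_nonneg (u 0), sq_nonneg (u 1), sq_nonneg (u 2)]
    have e2 : u 2 = 0 := by nlinarith [sq_nonneg (u 0), sq_nonneg (u 1), sq_nonneg (u 2)]
    funext i
    fin_cases i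
    · exact e0
    · exact e1
    · exact e2

lemma norm3_pos {u : V3} (h : u ≠ 0) : 0 < norm3 u :=
  Real.sqrt_pos.2 (dot3_self_pos h)

lemma norm3_sq {u : V3} : norm3 u ^ 2 = dot3 u u :=
  Real.sq_sqrt (dot3_self_nonneg u)

lemma HasDerivAt.dot3' {f g : ℝ → V3} {f' g' : V3} {x : ℝ} (hf : HasDerivAt f f' x)
    (hg : HasDerivAt g g' x) :
    HasDerivAt (fun x => dot3 (f x) (g x)) (dot3 f' (g x) + dot3 (f x) g') x := by
  have h0 : ∀ i, HasDerivAt (fun x => f x i) (f' i) x := fun i => hasDerivAt_pi.1 hf i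
  have h1 : ∀ i, HasDerivAt (fun x => g x i) (g' i) x := fun i => hasDerivAt_pi.1 hg i
  have := ((((h0 0).mul (h1 0)).add ((h0 1).mul (h1 1))).add ((h0 2).mul (h1 2))).congr_deriv
    (show _ = dot3 f' (g x) + dot3 (f x) g' by simp [dot3]; ring)
  exact this

lemma HasDerivAt.cross3' {f g : ℝ → V3} {f' g' : V3} {x : ℝ} (hf : HasDerivAt f f' x)
    (hg : HasDerivAt g g' x) :
    HasDerivAt (fun x => cross3 (f x) (g x)) (cross3 f' (g x) + cross3 (f x) g') x := by
  have h0 : ∀ i, HasDerivAt (fun x => f x i) (f' i) x := fun i => hasDerivAt_pi.1 hf i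
  have h1 : ∀ i, HasDerivAt (fun x => g x i) (g' i) x := fun i => hasDerivAt_pi.1 hg i
  rw [hasDerivAt_pi]
  intro i
  fin_cases i
  · show HasDerivAt (fun x => cross3 (f x) (g x) 0) (cross3 f' (g x) 0 + cross3 (f x) g' 0) x
    simp only [cross3, Matrix.cons_val_zero]
    exact (((h0 1).mul (h1 2)).sub ((h0 2).mul (h1 1))).congr_deriv (by ring)
  · show HasDerivAt (fun x => cross3 (f x) (g x) 1) (cross3 f' (g x) 1 + cross3 (f x) g' 1) x
    simp only [cross3, Matrix.cons_val_one, Matrix.head_cons]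
    exact (((h0 2).mul (h1 0)).sub ((h0 0).mul (h1 2))).congr_deriv (by simp only [Matrix.cons_val_zero]; ring)
  · show HasDerivAt (fun x => cross3 (f x) (g x) 2) (cross3 f' (g x) 2 + cross3 (f x) g' 2) x
    simp only [cross3, Matrix.cons_val_two, Matrix.tail_cons, Matrix.head_cons]
    exact (((h0 0).mul (h1 1)).sub ((h0 1).mul (h1 0))).congr_deriv (by ring)

lemma hasDerivAt_norm3 {f : ℝ → V3} {f' : V3} {x : ℝ} (hf : HasDerivAt f f' x)
    (hx : f x ≠ 0) :
    HasDerivAt (fun x => norm3 (f x)) (dot3 (f x) f' / norm3 (f x)) x := by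
  have hd : HasDerivAt (fun x => dot3 (f x) (f x)) (dot3 f' (f x) + dot3 (f x) f') x :=
    hf.dot3' hf
  have hq : dot3 (f x) (f x) ≠ 0 := ne_of_gt (dot3_self_pos hx)
  have := (Real.hasDerivAt_sqrt hq).comp x hd
  unfold norm3
  convert this using 1
  · rfl
  · rfl
  · rfl
  have h1 : Real.sqrt (dot3 (f x) (f x)) ≠ 0 := ne_of_gt (norm3_pos hx)
  have h2 : dot3 f' (f x) = dot3 (f x) f' := by unfold dot3; ring
  field_simp [Function.comp]
  rw [h2]; ring

lemma Continuous.dot3' {α : Type*} [TopologicalSpace α] {f g : α → V3} (hf : Continuous f) (hg : Continuous g) :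
    Continuous (fun x => dot3 (f x) (g x)) := by
  unfold dot3
  fun_prop

lemma Continuous.cross3' {α : Type*} [TopologicalSpace α] {f g : α → V3} (hf : Continuous f) (hg : Continuous g) :
    Continuous (fun x => cross3 (f x) (g x)) := by
  unfold cross3
  apply continuous_pi
  intro i
  fin_cases i <;> simp <;> fun_prop

lemma continuous_norm3 {α : Type*} [TopologicalSpace α] {f : α → V3} (hf : Continuous f) :
    Continuous (fun x => norm3 (f x)) :=
  Real.continuous_sqrt.comp (hf.dot3' hf)


lemma dot3_comm (u v : V3) : dot3 u v = dot3 v u := by unfold dot3; ring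

lemma dot3_smul_left (a : ℝ) (u v : V3) : dot3 (a • u) v = a * dot3 u v := by
  simp [dot3, mul_add, mul_assoc]

lemma dot3_smul_right (a : ℝ) (u v : V3) : dot3 u (a • v) = a * dot3 u v := by
  simp [dot3]; ring

lemma dot3_add_left (u v w : V3) : dot3 (u + v) w = dot3 u w + dot3 v w := by
  simp [dot3]; ring

lemma dot3_add_right (u v w : V3) : dot3 u (v + w) = dot3 u v + dot3 u w := by
  simp [dot3]; ring

lemma key_kappa (X Y : V3) (hX : X ≠ 0) :
    dot3 ((norm3 X)⁻¹ • ((norm3 X)⁻¹ • Y + (-(dot3 X Y / norm3 X) / (norm3 X)^2) • X))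
         ((norm3 X)⁻¹ • ((norm3 X)⁻¹ • Y + (-(dot3 X Y / norm3 X) / (norm3 X)^2) • X))
      * norm3 X
    = dot3 Y Y / (norm3 X)^3 - (dot3 X Y)^2 / (norm3 X)^5 := by
  have hs : 0 < norm3 X := norm3_pos hX
  have hsne : norm3 X ≠ 0 := ne_of_gt hs
  have h2 : dot3 X X = norm3 X ^ 2 := norm3_sq.symm
  simp only [dot3_smul_left, dot3_smul_right, dot3_add_left, dot3_add_right,
    dot3_comm Y X, h2]
  field_simp
  ring

/-! ### The binormal field expressed explicitly -/

/-- Second derivative of the curve. -/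
def aF (c : ℝ → V3) : ℝ → V3 := deriv (deriv c)
/-- Third derivative. -/
def jF (c : ℝ → V3) : ℝ → V3 := deriv (aF c)
/-- Fourth derivative. -/
def j2F (c : ℝ → V3) : ℝ → V3 := deriv (jF c)
/-- Speed. -/
def rF (c : ℝ → V3) (θ : ℝ) : ℝ := norm3 (deriv c θ)
/-- `⟨c',c''⟩`. -/
def pF (c : ℝ → V3) (θ : ℝ) : ℝ := dot3 (deriv c θ) (aF c θ)
/-- `c' × c''`. -/
def uF (c : ℝ → V3) (θ : ℝ) : V3 := cross3 (deriv c θ) (aF c θ)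
/-- The binormal field `Y = r⁻³ (c' × c'')`. -/
def YF (c : ℝ → V3) (θ : ℝ) : V3 := ((rF c θ)^3)⁻¹ • uF c θ
/-- `Y'`. -/
def wF (c : ℝ → V3) (θ : ℝ) : V3 :=
  (-3 * pF c θ * ((rF c θ)^5)⁻¹) • uF c θ
    + ((rF c θ)^3)⁻¹ • cross3 (deriv c θ) (jF c θ)
/-- `Y''`. -/
def wdF (c : ℝ → V3) (θ : ℝ) : V3 :=
  (-3 * (dot3 (aF c θ) (aF c θ) + dot3 (deriv c θ) (jF c θ)) * ((rF c θ)^5)⁻¹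
      + 15 * (pF c θ)^2 * ((rF c θ)^7)⁻¹) • uF c θ
    + (-6 * pF c θ * ((rF c θ)^5)⁻¹) • cross3 (deriv c θ) (jF c θ)
    + ((rF c θ)^3)⁻¹ • (cross3 (aF c θ) (jF c θ) + cross3 (deriv c θ) (j2F c θ))
/-- Potential whose `θ`-derivative is the first variation density of `K`. -/
def gF (c : ℝ → V3) (θ : ℝ) : ℝ := -2 * dot3 (uF c θ) (jF c θ) * ((rF c θ)^6)⁻¹
/-- `g'`. -/
def gdF (c : ℝ → V3) (θ : ℝ) : ℝ :=
  -2 * (dot3 (cross3 (deriv c θ) (jF c θ)) (jF c θ) + dot3 (uF c θ) (j2F c θ))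
      * ((rF c θ)^6)⁻¹
    + 12 * dot3 (uF c θ) (jF c θ) * pF c θ * ((rF c θ)^8)⁻¹

lemma v3_eq {x y : V3} (h0 : x 0 = y 0) (h1 : x 1 = y 1) (h2 : x 2 = y 2) : x = y := by
  funext i; fin_cases i
  exacts [h0, h1, h2]

section Curve

variable {c : ℝ → V3}

lemma smooth_v (hsm : ContDiff ℝ (⊤ : ℕ∞) c) : ContDiff ℝ (↑(⊤:ℕ∞)) (deriv c) :=
  (contDiff_infty_iff_deriv.1 (hsm.of_le (by simp))).2

lemma smooth_a (hsm : ContDiff ℝ (⊤ : ℕ∞) c) : ContDiff ℝ (↑(⊤:ℕ∞)) (aF c) :=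
  (contDiff_infty_iff_deriv.1 (smooth_v hsm)).2

lemma smooth_j (hsm : ContDiff ℝ (⊤ : ℕ∞) c) : ContDiff ℝ (↑(⊤:ℕ∞)) (jF c) :=
  (contDiff_infty_iff_deriv.1 (smooth_a hsm)).2

lemma hd_c (hsm : ContDiff ℝ (⊤ : ℕ∞) c) (θ : ℝ) : HasDerivAt c (deriv c θ) θ :=
  ((contDiff_infty_iff_deriv.1 (hsm.of_le (by simp))).1 θ).hasDerivAt

lemma hd_v (hsm : ContDiff ℝ (⊤ : ℕ∞) c) (θ : ℝ) : HasDerivAt (deriv c) (aF c θ) θ :=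
  ((contDiff_infty_iff_deriv.1 (smooth_v hsm)).1 θ).hasDerivAt

lemma hd_a (hsm : ContDiff ℝ (⊤ : ℕ∞) c) (θ : ℝ) : HasDerivAt (aF c) (jF c θ) θ :=
  ((contDiff_infty_iff_deriv.1 (smooth_a hsm)).1 θ).hasDerivAt

lemma hd_j (hsm : ContDiff ℝ (⊤ : ℕ∞) c) (θ : ℝ) : HasDerivAt (jF c) (j2F c θ) θ :=
  ((contDiff_infty_iff_deriv.1 (smooth_j hsm)).1 θ).hasDerivAt

lemma rF_pos (hne : ∀ θ, deriv c θ ≠ 0) (θ : ℝ) : 0 < rF c θ := norm3_pos (hne θ)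

lemma rF_ne (hne : ∀ θ, deriv c θ ≠ 0) (θ : ℝ) : rF c θ ≠ 0 := ne_of_gt (rF_pos hne θ)

lemma hd_r (hsm : ContDiff ℝ (⊤ : ℕ∞) c) (hne : ∀ θ, deriv c θ ≠ 0) (θ : ℝ) : HasDerivAt (rF c) (pF c θ / rF c θ) θ :=
  hasDerivAt_norm3 (hd_v hsm θ) (hne θ)

lemma hd_u (hsm : ContDiff ℝ (⊤ : ℕ∞) c) (θ : ℝ) :
    HasDerivAt (uF c) (cross3 (aF c θ) (aF c θ) + cross3 (deriv c θ) (jF c θ)) θ :=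
  (hd_v hsm θ).cross3' (hd_a hsm θ)

lemma hd_p (hsm : ContDiff ℝ (⊤ : ℕ∞) c) (θ : ℝ) :
    HasDerivAt (pF c) (dot3 (aF c θ) (aF c θ) + dot3 (deriv c θ) (jF c θ)) θ :=
  (hd_v hsm θ).dot3' (hd_a hsm θ)

lemma hd_rinv (hsm : ContDiff ℝ (⊤ : ℕ∞) c) (hne : ∀ θ, deriv c θ ≠ 0) (n : ℕ) (hn : 0 < n)
    (θ : ℝ) :
    HasDerivAt (fun θ => ((rF c θ)^n)⁻¹)
      (-(n : ℝ) * pF c θ * ((rF c θ)^(n+2))⁻¹) θ := by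
  have h := ((hd_r hsm hne θ).pow n).inv (pow_ne_zero n (rF_ne hne θ))
  refine h.congr_deriv ?_
  have hr := rF_ne hne θ
  rcases n with _ | m
  · omega
  · simp only [Nat.add_sub_cancel, Pi.pow_apply]
    field_simp
    ring

lemma hd_Y (hsm : ContDiff ℝ (⊤ : ℕ∞) c) (hne : ∀ θ, deriv c θ ≠ 0) (θ : ℝ) :
    HasDerivAt (YF c) (wF c θ) θ := by
  have h := (hd_rinv hsm hne 3 (by norm_num) θ).smul (hd_u hsm θ)
  refine (h.congr_deriv ?_ : HasDerivAt (YF c) _ θ)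
  have hr := rF_ne hne θ
  refine v3_eq ?_ ?_ ?_ <;>
    simp only [wF, uF, pF, cross3, Pi.add_apply, Pi.smul_apply, smul_eq_mul,
      Matrix.cons_val_zero, Matrix.cons_val_one, Matrix.cons_val_two,
      Matrix.head_cons, Matrix.tail_cons] <;>
    field_simp <;> ring

lemma hd_w (hsm : ContDiff ℝ (⊤ : ℕ∞) c) (hne : ∀ θ, deriv c θ ≠ 0) (θ : ℝ) :
    HasDerivAt (wF c) (wdF c θ) θ := by
  have hc1 : HasDerivAt (fun θ => -3 * pF c θ * ((rF c θ)^5)⁻¹)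
      ((-3 * (dot3 (aF c θ) (aF c θ) + dot3 (deriv c θ) (jF c θ))) * ((rF c θ)^5)⁻¹
        + (-3 * pF c θ) * (-(5:ℝ) * pF c θ * ((rF c θ)^7)⁻¹)) θ := by
    have := (((hd_p hsm θ).const_mul (-3)).mul (hd_rinv hsm hne 5 (by norm_num) θ))
    refine this.congr_deriv ?_
    push_cast
    ring
  have hvj : HasDerivAt (fun θ => cross3 (deriv c θ) (jF c θ))
      (cross3 (aF c θ) (jF c θ) + cross3 (deriv c θ) (j2F c θ)) θ :=
    (hd_v hsm θ).cross3' (hd_j hsm θ)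
  have h := (hc1.smul (hd_u hsm θ)).add ((hd_rinv hsm hne 3 (by norm_num) θ).smul hvj)
  refine (h.congr_deriv ?_ : HasDerivAt (wF c) _ θ)
  have hr := rF_ne hne θ
  refine v3_eq ?_ ?_ ?_ <;>
    simp only [wdF, uF, pF, cross3, Pi.add_apply, Pi.smul_apply, smul_eq_mul,
      Matrix.cons_val_zero, Matrix.cons_val_one, Matrix.cons_val_two,
      Matrix.head_cons, Matrix.tail_cons] <;>
    field_simp <;> ring

lemma hd_g (hsm : ContDiff ℝ (⊤ : ℕ∞) c) (hne : ∀ θ, deriv c θ ≠ 0) (θ : ℝ) :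
    HasDerivAt (gF c) (gdF c θ) θ := by
  have huj : HasDerivAt (fun θ => dot3 (uF c θ) (jF c θ))
      (dot3 (cross3 (aF c θ) (aF c θ) + cross3 (deriv c θ) (jF c θ)) (jF c θ)
        + dot3 (uF c θ) (j2F c θ)) θ :=
    (hd_u hsm θ).dot3' (hd_j hsm θ)
  have h := ((huj.const_mul (-2)).mul (hd_rinv hsm hne 6 (by norm_num) θ))
  refine (h.congr_deriv ?_ : HasDerivAt (gF c) _ θ)
  have hr := rF_ne hne θ
  simp only [gdF, uF, pF, dot3, cross3, Pi.add_apply, Pi.smul_apply, smul_eq_mul,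
    Matrix.cons_val_zero, Matrix.cons_val_one, Matrix.cons_val_two,
    Matrix.head_cons, Matrix.tail_cons]
  push_cast
  field_simp
  ring

lemma Yeq (hsm : ContDiff ℝ (⊤ : ℕ∞) c) (hne : ∀ θ, deriv c θ ≠ 0) (θ : ℝ) :
    cross3 (unitT c θ) (Ds2c c θ) = YF c θ := by
  have hr := rF_ne hne θ
  have hDs : Ds c c = fun θ => (rF c θ)⁻¹ • deriv c θ := rfl
  have hd : HasDerivAt (Ds c c)
      ((rF c θ)⁻¹ • aF c θ + (-(pF c θ / rF c θ) / rF c θ ^ 2) • deriv c θ) θ := by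
    rw [hDs]
    exact ((hd_r hsm hne θ).inv hr).smul (hd_v hsm θ)
  have hDs2 : Ds2c c θ =
      (rF c θ)⁻¹ • ((rF c θ)⁻¹ • aF c θ + (-(pF c θ / rF c θ) / rF c θ ^ 2) • deriv c θ) := by
    show (norm3 (deriv c θ))⁻¹ • deriv (Ds c c) θ = _
    rw [hd.deriv]
    rfl
  have hT : unitT c θ = (rF c θ)⁻¹ • deriv c θ := rfl
  rw [hDs2, hT]
  refine v3_eq ?_ ?_ ?_ <;>
    simp only [YF, uF, pF, cross3, dot3, Pi.add_apply, Pi.smul_apply, smul_eq_mul,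
      Matrix.cons_val_zero, Matrix.cons_val_one, Matrix.cons_val_two,
      Matrix.head_cons, Matrix.tail_cons] <;>
    field_simp <;> ring

lemma dot_v_w (hne : ∀ θ, deriv c θ ≠ 0) (θ : ℝ) : dot3 (deriv c θ) (wF c θ) = 0 := by
  have hr := rF_ne hne θ
  simp only [wF, uF, pF, dot3, cross3, Pi.add_apply, Pi.smul_apply, smul_eq_mul,
    Matrix.cons_val_zero, Matrix.cons_val_one, Matrix.cons_val_two,
    Matrix.head_cons, Matrix.tail_cons]
  field_simp
  ring

lemma dot_aw_vwd (hne : ∀ θ, deriv c θ ≠ 0) (θ : ℝ) :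
    dot3 (aF c θ) (wF c θ) + dot3 (deriv c θ) (wdF c θ) = 0 := by
  have hr := rF_ne hne θ
  simp only [wF, wdF, uF, pF, dot3, cross3, Pi.add_apply, Pi.smul_apply, smul_eq_mul,
    Matrix.cons_val_zero, Matrix.cons_val_one, Matrix.cons_val_two,
    Matrix.head_cons, Matrix.tail_cons]
  field_simp
  ring

lemma Continuous.cmul {α : Type*} [TopologicalSpace α] {f : α → ℝ} (h : Continuous f) (k : ℝ) : Continuous fun x => k * f x :=
  continuous_const.mul h

lemma cont_v (hsm : ContDiff ℝ (⊤ : ℕ∞) c) : Continuous (deriv c) := (smooth_v hsm).continuous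
lemma cont_a (hsm : ContDiff ℝ (⊤ : ℕ∞) c) : Continuous (aF c) := (smooth_a hsm).continuous
lemma cont_j (hsm : ContDiff ℝ (⊤ : ℕ∞) c) : Continuous (jF c) := (smooth_j hsm).continuous
lemma cont_j2 (hsm : ContDiff ℝ (⊤ : ℕ∞) c) : Continuous (j2F c) :=
  (contDiff_infty_iff_deriv.1 (smooth_j hsm)).2.continuous

lemma cont_r (hsm : ContDiff ℝ (⊤ : ℕ∞) c) : Continuous (rF c) :=
  continuous_norm3 (cont_v hsm)

lemma cont_rpow_inv (hsm : ContDiff ℝ (⊤ : ℕ∞) c) (hne : ∀ θ, deriv c θ ≠ 0) (n : ℕ) :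
    Continuous (fun θ => ((rF c θ)^n)⁻¹) :=
  ((cont_r hsm).pow n).inv₀ (fun θ => pow_ne_zero n (rF_ne hne θ))

lemma cont_w (hsm : ContDiff ℝ (⊤ : ℕ∞) c) (hne : ∀ θ, deriv c θ ≠ 0) : Continuous (wF c) := by
  unfold wF uF pF
  simp only [mul_assoc]
  have h1 := cont_v hsm; have h2 := cont_a hsm; have h3 := cont_j hsm
  exact ((((h1.dot3' h2).mul (cont_rpow_inv hsm hne 5)).cmul (-3)).smul
      (h1.cross3' h2)).add
    ((cont_rpow_inv hsm hne 3).smul (h1.cross3' h3))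

lemma cont_wd (hsm : ContDiff ℝ (⊤ : ℕ∞) c) (hne : ∀ θ, deriv c θ ≠ 0) : Continuous (wdF c) := by
  unfold wdF uF pF
  simp only [mul_assoc]
  have h1 := cont_v hsm; have h2 := cont_a hsm; have h3 := cont_j hsm; have h4 := cont_j2 hsm
  refine (Continuous.add ?_ ?_).add ?_
  · exact ((((h2.dot3' h2).add (h1.dot3' h3)).mul
      (cont_rpow_inv hsm hne 5)).cmul (-3)).add
      ((((h1.dot3' h2).pow 2).mul (cont_rpow_inv hsm hne 7)).cmul 15) |>.smul
      (h1.cross3' h2)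
  · exact (((h1.dot3' h2).mul (cont_rpow_inv hsm hne 5)).cmul (-6)).smul
      (h1.cross3' h3)
  · exact (cont_rpow_inv hsm hne 3).smul ((h2.cross3' h3).add (h1.cross3' h4))

lemma cont_gd (hsm : ContDiff ℝ (⊤ : ℕ∞) c) (hne : ∀ θ, deriv c θ ≠ 0) : Continuous (gdF c) := by
  unfold gdF uF pF
  simp only [mul_assoc]
  have h1 := cont_v hsm; have h2 := cont_a hsm; have h3 := cont_j hsm; have h4 := cont_j2 hsm
  refine Continuous.add (Continuous.cmul (Continuous.mul ?_ (cont_rpow_inv hsm hne 6)) (-2))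
    (Continuous.cmul (Continuous.mul ?_ (Continuous.mul ?_ (cont_rpow_inv hsm hne 8))) 12)
  · exact ((h1.cross3' h3).dot3' h3).add ((h1.cross3' h2).dot3' h4)
  · exact (h1.cross3' h2).dot3' h3
  · exact h1.dot3' h2

variable {c : ℝ → V3}

lemma per_deriv {f : ℝ → V3} (hf : ∀ θ, f (θ + 2*π) = f θ) (θ : ℝ) :
    deriv f (θ + 2*π) = deriv f θ := by
  have h : (fun x => f (x + 2*π)) = f := funext hf
  calc deriv f (θ + 2*π) = deriv (fun x => f (x + 2*π)) θ :=
        (deriv_comp_add_const f (2*π) θ).symm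
    _ = deriv f θ := by rw [h]

lemma gF_per (hper : ∀ θ, c (θ + 2*π) = c θ) : gF c (0 + 2*π) = gF c 0 := by
  have pv := per_deriv hper
  have pa : ∀ θ, aF c (θ + 2*π) = aF c θ := per_deriv pv
  have pj : ∀ θ, jF c (θ + 2*π) = jF c θ := per_deriv pa
  simp only [gF, uF, pF, rF, pv 0, pa 0, pj 0]

lemma gd_integral_zero (hsm : ContDiff ℝ (⊤ : ℕ∞) c) (hne : ∀ θ, deriv c θ ≠ 0)
    (hper : ∀ θ, c (θ + 2*π) = c θ) :
    (∫ θ in (0:ℝ)..(2*π), gdF c θ) = 0 := by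
  have h := intervalIntegral.integral_eq_sub_of_hasDerivAt
    (f := gF c) (f' := gdF c) (a := (0:ℝ)) (b := 2*π)
    (fun θ _ => hd_g hsm hne θ)
    ((cont_gd hsm hne).intervalIntegrable 0 (2*π))
  rw [h]
  have := gF_per hper
  rw [zero_add] at this
  rw [this, sub_self]

lemma hd_ct (hsm : ContDiff ℝ (⊤ : ℕ∞) c) (hne : ∀ θ, deriv c θ ≠ 0) (t θ : ℝ) :
    HasDerivAt (fun θ => c θ + t • YF c θ) (deriv c θ + t • wF c θ) θ :=
  (hd_c hsm θ).add ((hd_Y hsm hne θ).const_smul t)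

lemma Q_pos (hne : ∀ θ, deriv c θ ≠ 0) (t θ : ℝ) :
    0 < dot3 (deriv c θ) (deriv c θ) + t^2 * dot3 (wF c θ) (wF c θ) :=
  add_pos_of_pos_of_nonneg (dot3_self_pos (hne θ))
    (mul_nonneg (sq_nonneg t) (dot3_self_nonneg _))

lemma dot_ct (hne : ∀ θ, deriv c θ ≠ 0) (t θ : ℝ) :
    dot3 (deriv c θ + t • wF c θ) (deriv c θ + t • wF c θ)
      = dot3 (deriv c θ) (deriv c θ) + t^2 * dot3 (wF c θ) (wF c θ) := by
  have hvw := dot_v_w hne θ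
  simp only [dot3_add_left, dot3_add_right, dot3_smul_left, dot3_smul_right,
    dot3_comm (wF c θ) (deriv c θ), hvw]
  ring

lemma norm_ct (hne : ∀ θ, deriv c θ ≠ 0) (t θ : ℝ) :
    norm3 (deriv c θ + t • wF c θ)
      = Real.sqrt (dot3 (deriv c θ) (deriv c θ) + t^2 * dot3 (wF c θ) (wF c θ)) := by
  unfold norm3
  rw [dot_ct hne t θ]

lemma len_deriv (hsm : ContDiff ℝ (⊤ : ℕ∞) c) (hne : ∀ θ, deriv c θ ≠ 0) :
    HasDerivAt (fun t : ℝ =>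
      curveLen (fun θ => c θ + t • cross3 (unitT c θ) (Ds2c c θ))) 0 0 := by
  have hrepl : ∀ t : ℝ, (fun θ => c θ + t • cross3 (unitT c θ) (Ds2c c θ))
      = (fun θ => c θ + t • YF c θ) :=
    fun t => funext fun θ => by rw [Yeq hsm hne θ]
  set Q : ℝ → ℝ → ℝ :=
    fun t θ => dot3 (deriv c θ) (deriv c θ) + t^2 * dot3 (wF c θ) (wF c θ) with hQ
  have hQpos : ∀ t θ, 0 < Q t θ := Q_pos hne
  have hLen : ∀ t : ℝ, curveLen (fun θ => c θ + t • cross3 (unitT c θ) (Ds2c c θ))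
      = ∫ θ in (0:ℝ)..(2*π), Real.sqrt (Q t θ) := by
    intro t
    rw [hrepl t]
    unfold curveLen
    refine intervalIntegral.integral_congr fun θ _ => ?_
    rw [(hd_ct hsm hne t θ).deriv]
    exact norm_ct hne t θ
  rw [show (fun t : ℝ => curveLen (fun θ => c θ + t • cross3 (unitT c θ) (Ds2c c θ)))
      = fun t => ∫ θ in (0:ℝ)..(2*π), Real.sqrt (Q t θ) from funext hLen]
  -- dominated differentiation
  have hwc := cont_w hsm hne
  have hvc := cont_v hsm
  have hdww : Continuous fun θ => dot3 (wF c θ) (wF c θ) := hwc.dot3' hwc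
  have hQc : ∀ t, Continuous fun θ => Q t θ :=
    fun t => (hvc.dot3' hvc).add ((hdww.cmul (t^2)).congr (fun θ => by ring))
  have key := intervalIntegral.hasDerivAt_integral_of_dominated_loc_of_deriv_le
    (F := fun t θ => Real.sqrt (Q t θ))
    (F' := fun t θ => t * dot3 (wF c θ) (wF c θ) / Real.sqrt (Q t θ))
    (x₀ := (0:ℝ)) (a := (0:ℝ)) (b := 2*π) (μ := MeasureTheory.volume)
    (bound := fun θ => dot3 (wF c θ) (wF c θ) / rF c θ)
    (s := Metric.ball 0 1) (Metric.ball_mem_nhds 0 one_pos)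
    (Filter.Eventually.of_forall fun t =>
      (Real.continuous_sqrt.comp (hQc t)).aestronglyMeasurable)
    ((Real.continuous_sqrt.comp (hQc 0)).intervalIntegrable 0 (2*π))
    (((continuous_const.mul hdww).div (Real.continuous_sqrt.comp (hQc 0))
      (fun θ => ne_of_gt (Real.sqrt_pos.2 (hQpos 0 θ)))).aestronglyMeasurable)
    ?_ ?_ ?_
  · have h0 : (∫ θ in (0:ℝ)..(2*π),
        (0:ℝ) * dot3 (wF c θ) (wF c θ) / Real.sqrt (Q 0 θ)) = 0 := by
      simp
    rw [h0] at key
    exact key.2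
  · refine MeasureTheory.ae_of_all _ fun θ _ t ht => ?_
    have h1 : Real.sqrt (dot3 (deriv c θ) (deriv c θ)) ≤ Real.sqrt (Q t θ) :=
      Real.sqrt_le_sqrt (by simp only [hQ]; nlinarith [mul_nonneg (sq_nonneg t) (dot3_self_nonneg (wF c θ))])
    have hr : rF c θ = Real.sqrt (dot3 (deriv c θ) (deriv c θ)) := rfl
    have hrpos : 0 < rF c θ := rF_pos hne θ
    have hQs : 0 < Real.sqrt (Q t θ) := Real.sqrt_pos.2 (hQpos t θ)
    have htabs : |t| ≤ 1 := le_of_lt (by simpa [Real.dist_eq] using Metric.mem_ball.1 ht)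
    have hw0 : 0 ≤ dot3 (wF c θ) (wF c θ) := dot3_self_nonneg _
    rw [Real.norm_eq_abs, abs_div, abs_mul, abs_of_nonneg hw0,
      abs_of_pos hQs]
    calc |t| * dot3 (wF c θ) (wF c θ) / Real.sqrt (Q t θ)
        ≤ 1 * dot3 (wF c θ) (wF c θ) / Real.sqrt (Q t θ) := by
          gcongr
      _ = dot3 (wF c θ) (wF c θ) / Real.sqrt (Q t θ) := by ring
      _ ≤ dot3 (wF c θ) (wF c θ) / rF c θ := by
          rw [hr]
          gcongr
  · exact (hdww.div (cont_r hsm) (rF_ne hne)).intervalIntegrable 0 (2*π)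
  · refine MeasureTheory.ae_of_all _ fun θ _ t _ => ?_
    have hin : HasDerivAt (fun t : ℝ => Q t θ) (2 * t * dot3 (wF c θ) (wF c θ)) t := by
      have := ((hasDerivAt_pow 2 t).mul_const (dot3 (wF c θ) (wF c θ))).const_add
        (dot3 (deriv c θ) (deriv c θ))
      refine this.congr_deriv ?_
      push_cast; ring
    have := (Real.hasDerivAt_sqrt (ne_of_gt (hQpos t θ))).comp t hin
    refine this.congr_deriv ?_
    have hQs : Real.sqrt (Q t θ) ≠ 0 := ne_of_gt (Real.sqrt_pos.2 (hQpos t θ))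
    field_simp

/-! ### totalK part -/

/-- tangent field of the deformed curve, jointly in `(t,θ)`. -/
def Vp (c : ℝ → V3) (z : ℝ × ℝ) : V3 := deriv c z.2 + z.1 • wF c z.2
/-- its `θ`-derivative. -/
def Dp (c : ℝ → V3) (z : ℝ × ℝ) : V3 := aF c z.2 + z.1 • wdF c z.2
/-- speed. -/
def Sp (c : ℝ → V3) (z : ℝ × ℝ) : ℝ := norm3 (Vp c z)
/-- integrand of `K` for the deformed curve. -/
def FKp (c : ℝ → V3) (z : ℝ × ℝ) : ℝ :=
  dot3 (Dp c z) (Dp c z) / Sp c z ^ 3 - dot3 (Vp c z) (Dp c z) ^ 2 / Sp c z ^ 5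
/-- `t`-derivative of the integrand. -/
def FKd (c : ℝ → V3) (z : ℝ × ℝ) : ℝ :=
  ((dot3 (wdF c z.2) (Dp c z) + dot3 (Dp c z) (wdF c z.2)) * Sp c z ^ 3
      - dot3 (Dp c z) (Dp c z)
          * (3 * Sp c z ^ 2 * (dot3 (Vp c z) (wF c z.2) / Sp c z))) / (Sp c z ^ 3) ^ 2
    - (2 * dot3 (Vp c z) (Dp c z)
          * (dot3 (wF c z.2) (Dp c z) + dot3 (Vp c z) (wdF c z.2)) * Sp c z ^ 5
        - dot3 (Vp c z) (Dp c z) ^ 2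
            * (5 * Sp c z ^ 4 * (dot3 (Vp c z) (wF c z.2) / Sp c z))) / (Sp c z ^ 5) ^ 2

lemma Vp_dot (hne : ∀ θ, deriv c θ ≠ 0) (z : ℝ × ℝ) :
    dot3 (Vp c z) (Vp c z)
      = dot3 (deriv c z.2) (deriv c z.2) + z.1^2 * dot3 (wF c z.2) (wF c z.2) :=
  dot_ct hne z.1 z.2

lemma Vp_ne (hne : ∀ θ, deriv c θ ≠ 0) (z : ℝ × ℝ) : Vp c z ≠ 0 := by
  intro h
  have h1 : dot3 (Vp c z) (Vp c z) = 0 := by rw [h]; simp [dot3]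
  have h2 := Vp_dot hne z
  have := Q_pos hne z.1 z.2
  rw [h1] at h2
  linarith

lemma Sp_pos (hne : ∀ θ, deriv c θ ≠ 0) (z : ℝ × ℝ) : 0 < Sp c z :=
  norm3_pos (Vp_ne hne z)

lemma Sp_ne (hne : ∀ θ, deriv c θ ≠ 0) (z : ℝ × ℝ) : Sp c z ≠ 0 :=
  ne_of_gt (Sp_pos hne z)

lemma cont_Vp (hsm : ContDiff ℝ (⊤ : ℕ∞) c) (hne : ∀ θ, deriv c θ ≠ 0) : Continuous (Vp c) :=
  ((cont_v hsm).comp continuous_snd).add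
    (continuous_fst.smul ((cont_w hsm hne).comp continuous_snd))

lemma cont_Dp (hsm : ContDiff ℝ (⊤ : ℕ∞) c) (hne : ∀ θ, deriv c θ ≠ 0) : Continuous (Dp c) :=
  ((cont_a hsm).comp continuous_snd).add
    (continuous_fst.smul ((cont_wd hsm hne).comp continuous_snd))

lemma cont_Sp (hsm : ContDiff ℝ (⊤ : ℕ∞) c) (hne : ∀ θ, deriv c θ ≠ 0) : Continuous (Sp c) :=
  continuous_norm3 (cont_Vp hsm hne)

lemma cont_FKp (hsm : ContDiff ℝ (⊤ : ℕ∞) c) (hne : ∀ θ, deriv c θ ≠ 0) : Continuous (FKp c) := by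
  have hV := cont_Vp hsm hne; have hD := cont_Dp hsm hne; have hS := cont_Sp hsm hne
  exact ((hD.dot3' hD).div (hS.pow 3) fun z => pow_ne_zero _ (Sp_ne hne z)).sub
    (((hV.dot3' hD).pow 2).div (hS.pow 5) fun z => pow_ne_zero _ (Sp_ne hne z))

lemma cont_FKd (hsm : ContDiff ℝ (⊤ : ℕ∞) c) (hne : ∀ θ, deriv c θ ≠ 0) : Continuous (FKd c) := by
  have hV := cont_Vp hsm hne; have hD := cont_Dp hsm hne; have hS := cont_Sp hsm hne
  have hw := (cont_w hsm hne).comp (continuous_snd : Continuous fun z : ℝ × ℝ => z.2)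
  have hwd := (cont_wd hsm hne).comp (continuous_snd : Continuous fun z : ℝ × ℝ => z.2)
  have hSne : ∀ z, Sp c z ≠ 0 := Sp_ne hne
  refine Continuous.sub (Continuous.div ?_ ((hS.pow 3).pow 2)
      fun z => pow_ne_zero _ (pow_ne_zero _ (hSne z)))
    (Continuous.div ?_ ((hS.pow 5).pow 2)
      fun z => pow_ne_zero _ (pow_ne_zero _ (hSne z)))
  · exact (((hwd.dot3' hD).add (hD.dot3' hwd)).mul (hS.pow 3)).sub
      ((hD.dot3' hD).mul ((((hS.pow 2).cmul 3)).mul ((hV.dot3' hw).div hS hSne)))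
  · exact ((((hV.dot3' hD).cmul 2).mul ((hw.dot3' hD).add (hV.dot3' hwd))).mul (hS.pow 5)).sub
      (((hV.dot3' hD).pow 2).mul ((((hS.pow 4).cmul 5)).mul ((hV.dot3' hw).div hS hSne)))

lemma hd_FKp_t (hsm : ContDiff ℝ (⊤ : ℕ∞) c) (hne : ∀ θ, deriv c θ ≠ 0) (θ t : ℝ) :
    HasDerivAt (fun t => FKp c (t, θ)) (FKd c (t, θ)) t := by
  have hV : HasDerivAt (fun t => Vp c (t, θ)) (wF c θ) t := by
    have := ((hasDerivAt_id t).smul_const (wF c θ)).const_add (deriv c θ)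
    exact this.congr_deriv (one_smul _ _)
  have hD : HasDerivAt (fun t => Dp c (t, θ)) (wdF c θ) t := by
    have := ((hasDerivAt_id t).smul_const (wdF c θ)).const_add (aF c θ)
    exact this.congr_deriv (one_smul _ _)
  have hS : HasDerivAt (fun t => Sp c (t, θ))
      (dot3 (Vp c (t, θ)) (wF c θ) / Sp c (t, θ)) t :=
    hasDerivAt_norm3 hV (Vp_ne hne (t, θ))
  have hSne := Sp_ne hne (t, θ)
  have h1 := (hD.dot3' hD).div (hS.pow 3) (pow_ne_zero _ hSne)
  have h2 := ((hV.dot3' hD).pow 2).div (hS.pow 5) (pow_ne_zero _ hSne)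
  refine (h1.sub h2).congr_deriv ?_
  unfold FKd
  push_cast
  simp only [Pi.pow_apply]
  ring

lemma FKd_zero (hne : ∀ θ, deriv c θ ≠ 0) (θ : ℝ) : FKd c (0, θ) = gdF c θ := by
  have hvw := dot_v_w hne θ
  have horth := dot_aw_vwd hne θ
  have hr := rF_ne hne θ
  have hV0 : Vp c (0, θ) = deriv c θ := by unfold Vp; simp
  have hD0 : Dp c (0, θ) = aF c θ := by unfold Dp; simp
  have hS0 : Sp c (0, θ) = rF c θ := by unfold Sp rF; rw [hV0]
  unfold FKd
  rw [hV0, hD0, hS0, dot3_comm (wF c θ) (aF c θ), hvw, horth]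
  simp only [zero_div, mul_zero, sub_zero, zero_mul]
  simp only [gdF, wdF, uF, pF, dot3, cross3, Pi.add_apply, Pi.smul_apply, smul_eq_mul,
    Matrix.cons_val_zero, Matrix.cons_val_one, Matrix.cons_val_two,
    Matrix.head_cons, Matrix.tail_cons]
  field_simp
  ring

lemma ptK (hsm : ContDiff ℝ (⊤ : ℕ∞) c) (hne : ∀ θ, deriv c θ ≠ 0) (t θ : ℝ) :
    dot3 (Ds2c (fun θ => c θ + t • YF c θ) θ) (Ds2c (fun θ => c θ + t • YF c θ) θ)
      * norm3 (deriv (fun θ => c θ + t • YF c θ) θ) = FKp c (t, θ) := by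
  set ct := fun θ => c θ + t • YF c θ with hct
  have hG : deriv ct = fun θ => Vp c (t, θ) := funext fun θ => by
    rw [hct]
    exact (hd_ct hsm hne t θ).deriv
  have hDs : Ds ct ct = fun θ => (Sp c (t, θ))⁻¹ • Vp c (t, θ) := by
    funext θ
    unfold Ds Sp
    rw [hG]
  have hGd : HasDerivAt (fun θ => Vp c (t, θ)) (Dp c (t, θ)) θ := by
    unfold Vp Dp
    exact (hd_v hsm θ).add ((hd_w hsm hne θ).const_smul t)
  have hSd : HasDerivAt (fun θ => Sp c (t, θ))
      (dot3 (Vp c (t, θ)) (Dp c (t, θ)) / Sp c (t, θ)) θ :=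
    hasDerivAt_norm3 hGd (Vp_ne hne (t, θ))
  have hDsd : HasDerivAt (Ds ct ct)
      ((Sp c (t, θ))⁻¹ • Dp c (t, θ)
        + (-(dot3 (Vp c (t, θ)) (Dp c (t, θ)) / Sp c (t, θ)) / Sp c (t, θ) ^ 2)
            • Vp c (t, θ)) θ := by
    rw [hDs]
    exact (hSd.inv (Sp_ne hne (t, θ))).smul hGd
  have hDs2 : Ds2c ct θ = (Sp c (t, θ))⁻¹ • ((Sp c (t, θ))⁻¹ • Dp c (t, θ)
      + (-(dot3 (Vp c (t, θ)) (Dp c (t, θ)) / Sp c (t, θ)) / Sp c (t, θ) ^ 2)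
          • Vp c (t, θ)) := by
    show (norm3 (deriv ct θ))⁻¹ • deriv (Ds ct ct) θ = _
    rw [hDsd.deriv]
    simp only [hG]
    rfl
  rw [hDs2, show deriv ct θ = Vp c (t, θ) from by simp only [hG]]
  unfold FKp Sp
  exact key_kappa (Vp c (t, θ)) (Dp c (t, θ)) (Vp_ne hne (t, θ))

lemma K_deriv (hsm : ContDiff ℝ (⊤ : ℕ∞) c) (hne : ∀ θ, deriv c θ ≠ 0)
    (hper : ∀ θ, c (θ + 2*π) = c θ) :
    HasDerivAt (fun t : ℝ =>
      totalK (fun θ => c θ + t • cross3 (unitT c θ) (Ds2c c θ))) 0 0 := by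
  have hrepl : ∀ t : ℝ, (fun θ => c θ + t • cross3 (unitT c θ) (Ds2c c θ))
      = (fun θ => c θ + t • YF c θ) :=
    fun t => funext fun θ => by rw [Yeq hsm hne θ]
  have hK : ∀ t : ℝ, totalK (fun θ => c θ + t • cross3 (unitT c θ) (Ds2c c θ))
      = ∫ θ in (0:ℝ)..(2*π), FKp c (t, θ) := by
    intro t
    rw [hrepl t]
    unfold totalK arcInt
    exact intervalIntegral.integral_congr fun θ _ => ptK hsm hne t θ
  rw [funext hK]
  obtain ⟨C, hC⟩ := IsCompact.exists_bound_of_continuousOn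
    ((isCompact_Icc (a := (-1:ℝ)) (b := 1)).prod (isCompact_Icc (a := (0:ℝ)) (b := 2*π)))
    (cont_FKd hsm hne).continuousOn
  have hmk : ∀ t : ℝ, Continuous fun θ : ℝ => ((t : ℝ), θ) :=
    fun t => continuous_const.prodMk continuous_id
  have key := intervalIntegral.hasDerivAt_integral_of_dominated_loc_of_deriv_le
    (F := fun t θ => FKp c (t, θ)) (F' := fun t θ => FKd c (t, θ))
    (x₀ := (0:ℝ)) (a := (0:ℝ)) (b := 2*π) (μ := MeasureTheory.volume)
    (bound := fun _ => C) (s := Metric.ball 0 1) (Metric.ball_mem_nhds 0 one_pos)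
    (Filter.Eventually.of_forall fun t =>
      ((cont_FKp hsm hne).comp (hmk t)).aestronglyMeasurable)
    (((cont_FKp hsm hne).comp (hmk 0)).intervalIntegrable 0 (2*π))
    (((cont_FKd hsm hne).comp (hmk 0)).aestronglyMeasurable)
    ?_ intervalIntegrable_const ?_
  · have hval : (∫ θ in (0:ℝ)..(2*π), FKd c (0, θ)) = 0 := by
      rw [intervalIntegral.integral_congr (g := gdF c) fun θ _ => FKd_zero hne θ]
      exact gd_integral_zero hsm hne hper
    rw [hval] at key
    exact key.2
  · refine MeasureTheory.ae_of_all _ fun θ hθ t ht => ?_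
    refine hC (t, θ) ⟨?_, ?_⟩
    · have := Metric.mem_ball.1 ht
      rw [Real.dist_eq, sub_zero] at this
      have := abs_lt.1 this
      exact ⟨le_of_lt this.1, le_of_lt this.2⟩
    · have h2π : (0:ℝ) ≤ 2*π := by positivity
      rw [Set.uIoc_of_le h2π] at hθ
      exact ⟨le_of_lt hθ.1, hθ.2⟩
  · exact MeasureTheory.ae_of_all _ fun θ _ t _ => hd_FKp_t hsm hne θ t

/-- length, total squared curvature, and hence `H = ℓ·K` are infinitesimally
invariant under the binormal flow `Y = D_s c × D_s²c`. -/
theorem binormal_invariance (c : ℝ → V3) (hc : IsImmersed c) :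
    HasDerivAt (fun t : ℝ =>
      curveLen (fun θ => c θ + t • cross3 (unitT c θ) (Ds2c c θ))) 0 0 ∧
    HasDerivAt (fun t : ℝ =>
      totalK (fun θ => c θ + t • cross3 (unitT c θ) (Ds2c c θ))) 0 0 ∧
    HasDerivAt (fun t : ℝ =>
      curveLen (fun θ => c θ + t • cross3 (unitT c θ) (Ds2c c θ)) *
        totalK (fun θ => c θ + t • cross3 (unitT c θ) (Ds2c c θ))) 0 0 := by
  obtain ⟨⟨hsm, hper⟩, hne⟩ := hc
  have h1 := len_deriv hsm hne
  have h2 := K_deriv hsm hne hper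
  exact ⟨h1, h2, by simpa [Pi.mul_def] using h1.mul h2⟩
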